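/- Let Q be a finite quiver without cycles of length m with starting set S. Then for all a, b ∈ S, the concatenation ab is not a path of Q. Consequently, the sets P₁ := {x ∈ Path(Q') : ∃ a ∈ S with t(a)=s(x)} and P₂ := {ay ∈ Path(Q') : a ∈ S, y ∈ P₁} are disjoint subsets of Path(Q'). -/

import Mathlib

open scoped Classical

noncomputable section

variable {V E : Type*}

/-- A (positive-length) path in the quiver `(V, E, s, t)`: a nonempty list of arrows
in which consecutive arrows are composable, i.e. `t αᵢ = s αᵢ₊₁`. -/
def IsPath (s t : E → V) (l : List E) : Prop :=
  l ≠ [] ∧ l.Chain' (fun a b => t a = s b)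

/-- The source of a (nonempty) list of arrows, as an `Option`. -/
def src? (s : E → V) (l : List E) : Option V := l.head?.map s

/-- The target of a (nonempty) list of arrows, as an `Option`. -/
def tgt? (t : E → V) (l : List E) : Option V := l.getLast?.map t

/-- The quiver has no cycles: there is no path whose source equals its target. -/
def NoCycles (s t : E → V) : Prop :=
  ∀ l : List E, IsPath s t l → src? s l ≠ tgt? t l

/-- `m` is the maximum of the lengths of paths of the quiver (the length of the quiver). -/
def IsMaxPathLen (s t : E → V) (m : ℕ) : Prop :=
  (∃ l : List E, IsPath s t l ∧ l.length = m) ∧ ∀ l : List E, IsPath s t l → l.length ≤ m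

/-- The set `Path(Q)` of all paths of length `≥ 1`, as a subtype of lists of arrows. -/
abbrev PathQ (s t : E → V) := {l : List E // IsPath s t l}

/-- The underlying vector space of the Lie algebra `n_Q` obtained from the quiver:
the real vector space with basis `Path(Q)`. -/
abbrev nQ (s t : E → V) := PathQ s t →₀ ℝ

/-- The Lie bracket of two basis paths: `[x, y] = xy` if the concatenation `xy` is a path,
`[x, y] = -yx` if the concatenation `yx` is a path, and `[x, y] = 0` otherwise. -/
def braBasis (s t : E → V) (x y : PathQ s t) : nQ s t :=
  if h : IsPath s t (x.val ++ y.val) then Finsupp.single ⟨x.val ++ y.val, h⟩ 1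
  else if h' : IsPath s t (y.val ++ x.val) then -Finsupp.single ⟨y.val ++ x.val, h'⟩ 1
  else 0

/-- The Lie bracket of `n_Q`, extended bilinearly from basis paths. -/
def bra (s t : E → V) (u v : nQ s t) : nQ s t :=
  u.sum fun x cx => v.sum fun y cy => (cx * cy) • braBasis s t x y

/-- The span of all brackets of elements of two subspaces of `n_Q`. -/
def braSpan (s t : E → V) (M N : Submodule ℝ (nQ s t)) : Submodule ℝ (nQ s t) :=
  Submodule.span ℝ {z | ∃ u ∈ M, ∃ v ∈ N, z = bra s t u v}

/-- The starting set `S` of a quiver of length `m`: the set of arrows `a` such that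
`a x` is a path of length `m` for some path `x`. -/
def startSet (s t : E → V) (m : ℕ) : Set E :=
  {a | ∃ x : List E, IsPath s t x ∧ IsPath s t (a :: x) ∧ (a :: x).length = m}

/-- The arrow set `E' = (E ∖ S) ∪ {ab ∈ Path(Q) : a ∈ S, b ∈ E}` of the quiver `Q'`,
realized as a set of lists of arrows of `Q`. -/
def edgesQ' (s t : E → V) (m : ℕ) : Set (List E) :=
  {l | (∃ a : E, a ∉ startSet s t m ∧ l = [a]) ∨
       (∃ a b : E, a ∈ startSet s t m ∧ IsPath s t [a, b] ∧ l = [a, b])}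

/-- `L` is a decomposition of the list `l` of arrows as a path of the quiver `Q'`:
a nonempty chain of consecutively composable `Q'`-arrows whose concatenation is `l`. -/
def IsDecompQ' (s t : E → V) (m : ℕ) (L : List (List E)) (l : List E) : Prop :=
  L ≠ [] ∧ (∀ p ∈ L, p ∈ edgesQ' s t m) ∧
    L.Chain' (fun p q => tgt? t p = src? s q) ∧ L.flatten = l

/-- `l` underlies a path of the quiver `Q'`. -/
def IsPathQ' (s t : E → V) (m : ℕ) (l : List E) : Prop :=
  ∃ L : List (List E), IsDecompQ' s t m L l

/-- `f : E → E` is an automorphism of the quiver `(V, E, s, t)`. -/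
def IsQuivAut (s t : E → V) (f : E → E) : Prop :=
  Function.Bijective f ∧ ∀ x y : E, (t x = s y ↔ t (f x) = s (f y))

/-- `g` is an automorphism of the quiver whose arrow set is the set `ES` of lists of
arrows of `Q` (such as the quiver `Q'` with arrow set `edgesQ'`). -/
def IsQuivAutOn (s t : E → V) (ES : Set (List E)) (g : List E → List E) : Prop :=
  Set.BijOn g ES ES ∧
    ∀ p ∈ ES, ∀ q ∈ ES, (tgt? t p = src? s q ↔ tgt? t (g p) = src? s (g q))

/-- The subspace `n' = span Path(Q')` of `n_Q`. -/
def nQ'span (s t : E → V) (m : ℕ) : Submodule ℝ (nQ s t) :=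
  Submodule.span ℝ {u | ∃ p : PathQ s t, IsPathQ' s t m p.val ∧ u = Finsupp.single p 1}

/-- A single arrow, regarded as a path of length one. -/
def edgePath (s t : E → V) (a : E) : PathQ s t := ⟨[a], by
  refine ⟨List.cons_ne_nil _ _, ?_⟩
  first
  | exact List.chain'_singleton a
  | exact List.isChain_singleton a
  | (unfold List.Chain'; simp)
  | simp⟩

/-- The set `P₁` of paths of `Q'` whose source is the target of some arrow of `S`. -/
def P1set (s t : E → V) (m : ℕ) : Set (List E) :=
  {x | IsPathQ' s t m x ∧ ∃ a ∈ startSet s t m, src? s x = some (t a)}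

/-- The set `P₂ = {a y : a ∈ S, y ∈ P₁}` of paths of `Q'`. -/
def P2set (s t : E → V) (m : ℕ) : Set (List E) :=
  {l | IsPathQ' s t m l ∧ ∃ a ∈ startSet s t m, ∃ y ∈ P1set s t m, l = a :: y}

theorem IsPath.cons {s t : E → V} {a b : E} {l : List E} (h : IsPath s t (b :: l))
    (hab : t a = s b) : IsPath s t (a :: b :: l) :=
  ⟨List.cons_ne_nil _ _, List.isChain_cons_cons.mpr ⟨hab, h.2⟩⟩

theorem isPath_pair_iff {s t : E → V} {a b : E} : IsPath s t [a, b] ↔ t a = s b :=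
  ⟨fun h => (List.isChain_cons_cons.mp h.2).1,
    fun h => ⟨List.cons_ne_nil _ _, List.isChain_pair.mpr h⟩⟩

/-- Prepending an arrow to a path of maximal length would exceed the length of the quiver. -/
theorem not_isPath_pair_of_mem_startSet {s t : E → V} {m : ℕ}
    (hm : ∀ l : List E, IsPath s t l → l.length ≤ m) {b : E} (hb : b ∈ startSet s t m)
    (a : E) : ¬ IsPath s t [a, b] := by
  obtain ⟨x, -, hbx, hlen⟩ := hb
  intro hab
  have := hm _ (hbx.cons (isPath_pair_iff.mp hab))
  simp only [List.length_cons] at this hlen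
  omega

theorem P1set_disjoint_P2set {s t : E → V} {m : ℕ}
    (hm : ∀ l : List E, IsPath s t l → l.length ≤ m) : Disjoint (P1set s t m) (P2set s t m) := by
  rw [Set.disjoint_left]
  rintro l ⟨-, c, -, hsrc⟩ ⟨-, a, ha, y, -, rfl⟩
  have hca : t c = s a := by simpa [src?, eq_comm] using hsrc
  exact not_isPath_pair_of_mem_startSet hm ha c (isPath_pair_iff.mpr hca)

theorem startSet_concat_not_path_and_P1_P2_disjoint_general (s t : E → V)
    (m : ℕ) (hm : IsMaxPathLen s t m) :
    (∀ a ∈ startSet s t m, ∀ b ∈ startSet s t m, ¬ IsPath s t [a, b]) ∧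
    (P1set s t m ⊆ {l : List E | IsPathQ' s t m l}) ∧
    (P2set s t m ⊆ {l : List E | IsPathQ' s t m l}) ∧
    Disjoint (P1set s t m) (P2set s t m) :=
  ⟨fun a _ _ hb => not_isPath_pair_of_mem_startSet hm.2 hb a, fun _ hl => hl.1, fun _ hl => hl.1,
    P1set_disjoint_P2set hm.2⟩

/-- For a finite quiver without cycles of length `m`, the
concatenation `ab` of two arrows `a, b ∈ S` is never a path; consequently `P₁` and `P₂`
are disjoint subsets of `Path(Q')`. -/
theorem startSet_concat_not_path_and_P1_P2_disjoint [Finite V] [Finite E] (s t : E → V)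
    (hQ : NoCycles s t) (m : ℕ) (hm : IsMaxPathLen s t m) :
    (∀ a ∈ startSet s t m, ∀ b ∈ startSet s t m, ¬ IsPath s t [a, b]) ∧
    (P1set s t m ⊆ {l : List E | IsPathQ' s t m l}) ∧
    (P2set s t m ⊆ {l : List E | IsPathQ' s t m l}) ∧
    Disjoint (P1set s t m) (P2set s t m) :=
  startSet_concat_not_path_and_P1_P2_disjoint_general s t m hm

end
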